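/- arXiv:2311.17209 — 2 statements merged into one kernel-verified Lean document; each statement's English description precedes it below -/
import Mathlib

section
/- In the octonion projective plane, the unique line of the form ⟨e₁,1,e₂⟩ through B'=[-1,j,1] and C'=[k,-k,1] has e₁ = 1/2 + (1/2)j + (1/2)k + (1/2)I and e₂ = 1/2 - (1/2)j + (1/2)k + (1/2)I, and its intersection with the line x₁=0 is the point P = [0, -1/2 + (1/2)j - (1/2)k - (1/2)I, 1]. -/
/-!
Subtracting the incidence equations of `[x, y, 1]` and `[x', y', 1]` with `⟨e₁, 1, e₂⟩`
gives `(x' - x) e₁ = y - y'`. The octonions are a division algebra: `conj a (a x) = |a|² x`,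
so left multiplication by `x' - x ≠ 0` is injective and the line through `B'` and `C'` is
unique. It then suffices to check that the stated `⟨e₁, 1, e₂⟩` passes through `B'` and
`C'`. A point `[0, y, 1]` lies on `⟨e₁, 1, e₂⟩` iff `y = -e₂`, which gives `P`.
-/


/-- The octonions: 8-dimensional real Cayley–Dickson algebra with basis
`1, i, j, k, l, I, J, K` and the standard multiplication table
(`i·j = l`, `i·k = K`, `j·k = I`, etc.). -/
structure Oct where
  re : ℝ
  i : ℝ
  j : ℝ
  k : ℝ
  l : ℝ
  I : ℝ
  J : ℝ
  K : ℝ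

namespace Oct

/-- Build an octonion from its eight real coordinates (in order `re i j k l I J K`). -/
def o (re i j k l I J K : ℝ) : Oct := ⟨re, i, j, k, l, I, J, K⟩

instance : Zero Oct := ⟨o 0 0 0 0 0 0 0 0⟩
instance : One Oct := ⟨o 1 0 0 0 0 0 0 0⟩

def iu : Oct := o 0 1 0 0 0 0 0 0
def ju : Oct := o 0 0 1 0 0 0 0 0
def ku : Oct := o 0 0 0 1 0 0 0 0
def lu : Oct := o 0 0 0 0 1 0 0 0
def Iu : Oct := o 0 0 0 0 0 1 0 0
def Ju : Oct := o 0 0 0 0 0 0 1 0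
def Ku : Oct := o 0 0 0 0 0 0 0 1

instance : Add Oct :=
  ⟨fun x y => o (x.re + y.re) (x.i + y.i) (x.j + y.j) (x.k + y.k)
      (x.l + y.l) (x.I + y.I) (x.J + y.J) (x.K + y.K)⟩
instance : Neg Oct :=
  ⟨fun x => o (-x.re) (-x.i) (-x.j) (-x.k) (-x.l) (-x.I) (-x.J) (-x.K)⟩
instance : Sub Oct := ⟨fun x y => x + -y⟩

/-- Multiplication according to the standard Cayley–Dickson table
(rows × columns): `i·j = l`, `i·k = K`, `j·k = I`, `i·l = -j`, `i·I = J`,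
`i·J = -I`, `i·K = -k`, `j·l = i`, `j·I = -k`, `j·J = K`, `j·K = -J`,
`k·l = J`, `k·I = j`, `k·J = -l`, `k·K = i`, `l·I = K`, `l·J = k`,
`l·K = -I`, `I·J = i`, `I·K = l`, `J·K = j`, all units squaring to `-1`
and anticommuting pairwise. -/
instance : Mul Oct :=
  ⟨fun x y => o
    (x.re*y.re - x.i*y.i - x.j*y.j - x.k*y.k - x.l*y.l - x.I*y.I - x.J*y.J - x.K*y.K)
    (x.re*y.i + x.i*y.re + x.j*y.l - x.l*y.j + x.k*y.K - x.K*y.k + x.I*y.J - x.J*y.I)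
    (x.re*y.j + x.j*y.re - x.i*y.l + x.l*y.i + x.k*y.I - x.I*y.k + x.J*y.K - x.K*y.J)
    (x.re*y.k + x.k*y.re - x.i*y.K + x.K*y.i - x.j*y.I + x.I*y.j + x.l*y.J - x.J*y.l)
    (x.re*y.l + x.l*y.re + x.i*y.j - x.j*y.i - x.k*y.J + x.J*y.k + x.I*y.K - x.K*y.I)
    (x.re*y.I + x.I*y.re + x.j*y.k - x.k*y.j - x.i*y.J + x.J*y.i - x.l*y.K + x.K*y.l)
    (x.re*y.J + x.J*y.re + x.i*y.I - x.I*y.i + x.k*y.l - x.l*y.k - x.j*y.K + x.K*y.j)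
    (x.re*y.K + x.K*y.re + x.i*y.k - x.k*y.i + x.j*y.J - x.J*y.j + x.l*y.I - x.I*y.l)⟩

/-- Octonion conjugation. -/
def conj (x : Oct) : Oct := o x.re (-x.i) (-x.j) (-x.k) (-x.l) (-x.I) (-x.J) (-x.K)

/-- The squared norm `|x|²`. -/
def normSq (x : Oct) : ℝ :=
  x.re^2 + x.i^2 + x.j^2 + x.k^2 + x.l^2 + x.I^2 + x.J^2 + x.K^2

/-- Inverse: `x⁻¹ = conj x / |x|²` (and `0⁻¹ = 0`). -/
noncomputable instance : Inv Oct :=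
  ⟨fun x => o (x.re / normSq x) (-x.i / normSq x) (-x.j / normSq x) (-x.k / normSq x)
      (-x.l / normSq x) (-x.I / normSq x) (-x.J / normSq x) (-x.K / normSq x)⟩

end Oct

open Oct

/-- Homogeneous coordinate triples over the octonions. -/
abbrev O3 := Oct × Oct × Oct

/-- Incidence of the point `[x₁,x₂,x₃]` with the line `⟨a₁,a₂,a₃⟩`:
`x₁a₁ + x₂a₂ + x₃a₃ = 0`. -/
def incid (x m : O3) : Prop := x.1 * m.1 + x.2.1 * m.2.1 + x.2.2 * m.2.2 = 0

/-- `x` is a point of the octonion projective plane: of the form `[x,y,1]`, `[1,x,0]` or `[0,1,0]`. -/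
def isPt (x : O3) : Prop :=
  (∃ a b : Oct, x = (a, b, 1)) ∨ (∃ a : Oct, x = (1, a, 0)) ∨ x = (0, 1, 0)

/-- `m` is a line of the octonion projective plane: of the form `⟨a,1,b⟩`, `⟨1,0,a⟩` or `⟨0,0,1⟩`. -/
def isLn (m : O3) : Prop :=
  (∃ a b : Oct, m = (a, 1, b)) ∨ (∃ a : Oct, m = (1, 0, a)) ∨ m = (0, 0, 1)

/-- Three points are collinear if some line of the plane is incident with all of them. -/
def Collinear3 (X Y Z : O3) : Prop := ∃ m : O3, isLn m ∧ incid X m ∧ incid Y m ∧ incid Z m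

/-- Three lines are concurrent if some point of the plane is incident with all of them. -/
def Concurrent3 (m n p : O3) : Prop := ∃ X : O3, isPt X ∧ incid X m ∧ incid X n ∧ incid X p

namespace Oct

@[ext]
lemma ext {x y : Oct} (re : x.re = y.re) (i : x.i = y.i) (j : x.j = y.j) (k : x.k = y.k)
    (l : x.l = y.l) (I : x.I = y.I) (J : x.J = y.J) (K : x.K = y.K) : x = y := by
  cases x; cases y; congr

section Coordinates

variable (a b c d e f g h : ℝ) (x y : Oct)

@[simp] lemma re_o : (o a b c d e f g h).re = a := rfl
@[simp] lemma i_o : (o a b c d e f g h).i = b := rfl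
@[simp] lemma j_o : (o a b c d e f g h).j = c := rfl
@[simp] lemma k_o : (o a b c d e f g h).k = d := rfl
@[simp] lemma l_o : (o a b c d e f g h).l = e := rfl
@[simp] lemma I_o : (o a b c d e f g h).I = f := rfl
@[simp] lemma J_o : (o a b c d e f g h).J = g := rfl
@[simp] lemma K_o : (o a b c d e f g h).K = h := rfl

lemma zero_def : (0 : Oct) = o 0 0 0 0 0 0 0 0 := rfl
lemma one_def : (1 : Oct) = o 1 0 0 0 0 0 0 0 := rfl
lemma add_def : x + y = o (x.re + y.re) (x.i + y.i) (x.j + y.j) (x.k + y.k)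
    (x.l + y.l) (x.I + y.I) (x.J + y.J) (x.K + y.K) := rfl
lemma neg_def : -x = o (-x.re) (-x.i) (-x.j) (-x.k) (-x.l) (-x.I) (-x.J) (-x.K) := rfl
lemma mul_def : x * y = o
    (x.re*y.re - x.i*y.i - x.j*y.j - x.k*y.k - x.l*y.l - x.I*y.I - x.J*y.J - x.K*y.K)
    (x.re*y.i + x.i*y.re + x.j*y.l - x.l*y.j + x.k*y.K - x.K*y.k + x.I*y.J - x.J*y.I)
    (x.re*y.j + x.j*y.re - x.i*y.l + x.l*y.i + x.k*y.I - x.I*y.k + x.J*y.K - x.K*y.J)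
    (x.re*y.k + x.k*y.re - x.i*y.K + x.K*y.i - x.j*y.I + x.I*y.j + x.l*y.J - x.J*y.l)
    (x.re*y.l + x.l*y.re + x.i*y.j - x.j*y.i - x.k*y.J + x.J*y.k + x.I*y.K - x.K*y.I)
    (x.re*y.I + x.I*y.re + x.j*y.k - x.k*y.j - x.i*y.J + x.J*y.i - x.l*y.K + x.K*y.l)
    (x.re*y.J + x.J*y.re + x.i*y.I - x.I*y.i + x.k*y.l - x.l*y.k - x.j*y.K + x.K*y.j)
    (x.re*y.K + x.K*y.re + x.i*y.k - x.k*y.i + x.j*y.J - x.J*y.j + x.l*y.I - x.I*y.l) := rfl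

end Coordinates

instance : NonAssocRing Oct where
  add_assoc _ _ _ := by
    ext <;> simp only [add_def, re_o, i_o, j_o, k_o, l_o, I_o, J_o, K_o] <;> ring
  zero_add _ := by ext <;> simp [add_def, zero_def]
  add_zero _ := by ext <;> simp [add_def, zero_def]
  add_comm _ _ := by
    ext <;> simp only [add_def, re_o, i_o, j_o, k_o, l_o, I_o, J_o, K_o] <;> ring
  neg_add_cancel _ := by ext <;> simp [add_def, neg_def, zero_def]
  nsmul := nsmulRec
  zsmul := zsmulRec
  sub_eq_add_neg _ _ := rfl
  left_distrib _ _ _ := by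
    ext <;> simp only [add_def, mul_def, re_o, i_o, j_o, k_o, l_o, I_o, J_o, K_o] <;> ring
  right_distrib _ _ _ := by
    ext <;> simp only [add_def, mul_def, re_o, i_o, j_o, k_o, l_o, I_o, J_o, K_o] <;> ring
  zero_mul _ := by ext <;> simp [mul_def, zero_def]
  mul_zero _ := by ext <;> simp [mul_def, zero_def]
  one_mul _ := by ext <;> simp [mul_def, one_def]
  mul_one _ := by ext <;> simp [mul_def, one_def]

instance : SMul ℝ Oct :=
  ⟨fun r x =>
    o (r * x.re) (r * x.i) (r * x.j) (r * x.k) (r * x.l) (r * x.I) (r * x.J) (r * x.K)⟩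

lemma smul_def (r : ℝ) (x : Oct) :
    r • x = o (r * x.re) (r * x.i) (r * x.j) (r * x.k) (r * x.l) (r * x.I) (r * x.J) (r * x.K) :=
  rfl

instance : Module ℝ Oct where
  one_smul _ := by ext <;> simp [smul_def]
  mul_smul _ _ _ := by ext <;> simp [smul_def, mul_assoc]
  smul_zero _ := by ext <;> simp [smul_def, zero_def]
  smul_add _ _ _ := by ext <;> simp [smul_def, add_def, mul_add]
  add_smul _ _ _ := by ext <;> simp [smul_def, add_def, add_mul]
  zero_smul _ := by ext <;> simp [smul_def, zero_def]

lemma conj_mul_mul_self (a x : Oct) : conj a * (a * x) = normSq a • x := by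
  ext <;> simp only [conj, normSq, mul_def, smul_def, re_o, i_o, j_o, k_o, l_o, I_o, J_o, K_o] <;>
    ring

lemma normSq_eq_zero {a : Oct} : normSq a = 0 ↔ a = 0 := by
  refine ⟨fun h => ?_, fun h => by simp [h, normSq, zero_def]⟩
  simp only [normSq] at h
  ext <;> simp only [zero_def, re_o, i_o, j_o, k_o, l_o, I_o, J_o, K_o] <;>
    nlinarith [sq_nonneg a.re, sq_nonneg a.i, sq_nonneg a.j, sq_nonneg a.k, sq_nonneg a.l,
      sq_nonneg a.I, sq_nonneg a.J, sq_nonneg a.K]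

lemma mul_right_injective₀ {a : Oct} (ha : a ≠ 0) : Function.Injective (a * ·) := by
  intro x y h
  have hn : normSq a ≠ 0 := normSq_eq_zero.not.mpr ha
  have := congrArg (conj a * ·) h
  simp only [conj_mul_mul_self] at this
  exact smul_right_injective Oct hn this

end Oct

lemma incid_affine_iff {x y a b : Oct} : incid (x, y, 1) (a, 1, b) ↔ x * a + y + b = 0 := by
  simp only [incid, mul_one, one_mul]

lemma incid_affine_pair {x y x' y' e₁ e₂ : Oct}
    (h : incid (x, y, 1) (e₁, 1, e₂)) (h' : incid (x', y', 1) (e₁, 1, e₂)) :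
    (x' - x) * e₁ = y - y' ∧ e₂ = -(x * e₁ + y) := by
  rw [incid_affine_iff] at h h'
  refine ⟨?_, eq_neg_of_add_eq_zero_right h⟩
  calc (x' - x) * e₁ = (x' * e₁ + y' + e₂) - (x * e₁ + y + e₂) + (y - y') := by
        rw [sub_mul]; abel
    _ = y - y' := by rw [h, h', sub_zero, zero_add]

lemma affine_line_unique {x y x' y' e₁ e₂ f₁ f₂ : Oct} (hx : x ≠ x')
    (he : incid (x, y, 1) (e₁, 1, e₂) ∧ incid (x', y', 1) (e₁, 1, e₂))
    (hf : incid (x, y, 1) (f₁, 1, f₂) ∧ incid (x', y', 1) (f₁, 1, f₂)) :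
    e₁ = f₁ ∧ e₂ = f₂ := by
  obtain ⟨he₁, he₂⟩ := incid_affine_pair he.1 he.2
  obtain ⟨hf₁, hf₂⟩ := incid_affine_pair hf.1 hf.2
  have h₁ : e₁ = f₁ :=
    mul_right_injective₀ (sub_ne_zero.mpr hx.symm) (he₁.trans hf₁.symm)
  exact ⟨h₁, by rw [he₂, hf₂, h₁]⟩

lemma incid_zero_affine_iff {y a b : Oct} : incid (0, y, 1) (a, 1, b) ↔ y = -b := by
  rw [incid_affine_iff, zero_mul, zero_add, add_eq_zero_iff_eq_neg]

/-- The unique line `⟨e₁,1,e₂⟩` through `B' = [-1,j,1]` and `C' = [k,-k,1]` has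
`e₁ = 1/2 + (1/2)j + (1/2)k + (1/2)I` and `e₂ = 1/2 - (1/2)j + (1/2)k + (1/2)I`,
and its intersection with the line `x₁ = 0` (i.e. `⟨1,0,0⟩`) is
`P = [0, -1/2 + (1/2)j - (1/2)k - (1/2)I, 1]`. -/
theorem stmt7 :
    (∀ e₁ e₂ : Oct,
      (incid (-(1 : Oct), ju, (1 : Oct)) (e₁, 1, e₂) ∧
       incid (ku, -ku, (1 : Oct)) (e₁, 1, e₂)) ↔
      (e₁ = o (1/2) 0 (1/2) (1/2) 0 (1/2) 0 0 ∧
       e₂ = o (1/2) 0 (-(1/2)) (1/2) 0 (1/2) 0 0)) ∧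
    incid ((0 : Oct), o (-(1/2)) 0 (1/2) (-(1/2)) 0 (-(1/2)) 0 0, (1 : Oct))
      (o (1/2) 0 (1/2) (1/2) 0 (1/2) 0 0, 1, o (1/2) 0 (-(1/2)) (1/2) 0 (1/2) 0 0) ∧
    incid ((0 : Oct), o (-(1/2)) 0 (1/2) (-(1/2)) 0 (-(1/2)) 0 0, (1 : Oct))
      ((1 : Oct), (0 : Oct), (0 : Oct)) ∧
    (∀ y : Oct,
      incid ((0 : Oct), y, (1 : Oct))
        (o (1/2) 0 (1/2) (1/2) 0 (1/2) 0 0, 1, o (1/2) 0 (-(1/2)) (1/2) 0 (1/2) 0 0) →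
      y = o (-(1/2)) 0 (1/2) (-(1/2)) 0 (-(1/2)) 0 0) := by
  have hP : o (-(1/2)) 0 (1/2) (-(1/2)) 0 (-(1/2)) 0 0 =
      -o (1/2) 0 (-(1/2)) (1/2) 0 (1/2) 0 0 := by
    simp [neg_def]
  have hline : incid (-(1 : Oct), ju, (1 : Oct)) (o (1/2) 0 (1/2) (1/2) 0 (1/2) 0 0, 1,
        o (1/2) 0 (-(1/2)) (1/2) 0 (1/2) 0 0) ∧
      incid (ku, -ku, (1 : Oct)) (o (1/2) 0 (1/2) (1/2) 0 (1/2) 0 0, 1,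
        o (1/2) 0 (-(1/2)) (1/2) 0 (1/2) 0 0) := by
    simp only [incid_affine_iff]
    constructor <;> ext <;> simp only [ju, ku, one_def, zero_def, add_def, neg_def, mul_def,
      re_o, i_o, j_o, k_o, l_o, I_o, J_o, K_o] <;> norm_num
  have hBC : -(1 : Oct) ≠ ku := fun h => by simpa [ku, one_def, neg_def] using congrArg re h
  refine ⟨fun e₁ e₂ => ⟨fun h => affine_line_unique hBC h hline, ?_⟩, ?_, ?_, fun y hy => ?_⟩
  · rintro ⟨rfl, rfl⟩
    exact hline
  · rw [incid_zero_affine_iff, hP]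
  · simp [incid]
  · rwa [incid_zero_affine_iff, ← hP] at hy
end

section
/- In any projective plane, the converse Bricard property holds if and only if the Bricard property holds in the dual plane; i.e., the dual statement of the Bricard property is the converse Bricard property. -/
/-- An abstract projective plane with point type `Pt` and line type `Ln`:
any two distinct points lie on a unique line, any two distinct lines meet in a unique
point, and there are four points no three of which are collinear. -/
structure ProjectivePlane (Pt Ln : Type*) where
  incid : Pt → Ln → Prop
  join_unique : ∀ A B : Pt, A ≠ B → ∃! m : Ln, incid A m ∧ incid B m
  meet_unique : ∀ m n : Ln, m ≠ n → ∃! A : Pt, incid A m ∧ incid A n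
  nondeg : ∃ A B C D : Pt, ∀ m : Ln,
    ¬(incid A m ∧ incid B m ∧ incid C m) ∧ ¬(incid A m ∧ incid B m ∧ incid D m) ∧
    ¬(incid A m ∧ incid C m ∧ incid D m) ∧ ¬(incid B m ∧ incid C m ∧ incid D m)

namespace ProjectivePlane

variable {Pt Ln : Type*} (PP : ProjectivePlane Pt Ln)

/-- Three noncollinear points (a triangle). -/
def Triangle (A B C : Pt) : Prop := ∀ m : Ln, ¬(PP.incid A m ∧ PP.incid B m ∧ PP.incid C m)

/-- Three collinear points. -/
def Collin (X Y Z : Pt) : Prop := ∃ m : Ln, PP.incid X m ∧ PP.incid Y m ∧ PP.incid Z m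

/-- Three concurrent lines. -/
def Concur (m n p : Ln) : Prop := ∃ O : Pt, PP.incid O m ∧ PP.incid O n ∧ PP.incid O p

/-- The Bricard configuration for triangles `ABC`, `A'B'C'`: `bc, ca, ab, bc', ca', ab'`
are the sides, `aa', bb', cc'` the joins of corresponding vertices,
`P = BC ∩ B'C'`, `Q = AC ∩ A'C'`, `R = AB ∩ A'B'`, `D = BC ∩ AA'`, `E = AC ∩ BB'`,
`F = AB ∩ CC'`, and `pa = A'P`, `qb = B'Q`, `rc = C'R`. -/
def BricardConfig (A B C A' B' C' : Pt) (bc ca ab bc' ca' ab' aa' bb' cc' : Ln)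
    (P Q R D E F : Pt) (pa qb rc : Ln) : Prop :=
  PP.Triangle A B C ∧ PP.Triangle A' B' C' ∧
  PP.incid B bc ∧ PP.incid C bc ∧ PP.incid C ca ∧ PP.incid A ca ∧
  PP.incid A ab ∧ PP.incid B ab ∧
  PP.incid B' bc' ∧ PP.incid C' bc' ∧ PP.incid C' ca' ∧ PP.incid A' ca' ∧
  PP.incid A' ab' ∧ PP.incid B' ab' ∧
  PP.incid A aa' ∧ PP.incid A' aa' ∧ PP.incid B bb' ∧ PP.incid B' bb' ∧
  PP.incid C cc' ∧ PP.incid C' cc' ∧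
  PP.incid P bc ∧ PP.incid P bc' ∧ PP.incid Q ca ∧ PP.incid Q ca' ∧
  PP.incid R ab ∧ PP.incid R ab' ∧
  PP.incid D bc ∧ PP.incid D aa' ∧ PP.incid E ca ∧ PP.incid E bb' ∧
  PP.incid F ab ∧ PP.incid F cc' ∧
  PP.incid A' pa ∧ PP.incid P pa ∧ PP.incid B' qb ∧ PP.incid Q qb ∧
  PP.incid C' rc ∧ PP.incid R rc

/-- The Bricard property: in every Bricard configuration, if `A'P`, `B'Q`, `C'R` are
concurrent then `D`, `E`, `F` are collinear. -/
def Bricard : Prop :=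
  ∀ (A B C A' B' C' : Pt) (bc ca ab bc' ca' ab' aa' bb' cc' : Ln)
    (P Q R D E F : Pt) (pa qb rc : Ln),
    PP.BricardConfig A B C A' B' C' bc ca ab bc' ca' ab' aa' bb' cc' P Q R D E F pa qb rc →
    PP.Concur pa qb rc → PP.Collin D E F

/-- The converse Bricard property: in every Bricard configuration, if `D`, `E`, `F` are
collinear then `A'P`, `B'Q`, `C'R` are concurrent. -/
def ConverseBricard : Prop :=
  ∀ (A B C A' B' C' : Pt) (bc ca ab bc' ca' ab' aa' bb' cc' : Ln)
    (P Q R D E F : Pt) (pa qb rc : Ln),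
    PP.BricardConfig A B C A' B' C' bc ca ab bc' ca' ab' aa' bb' cc' P Q R D E F pa qb rc →
    PP.Collin D E F → PP.Concur pa qb rc

end ProjectivePlane

/-!
Dualizing a Bricard configuration gives a Bricard configuration of the dual plane: the two
triangles are replaced by their side triangles (in swapped order), the joins `AA', BB', CC'`
exchange roles with `P, Q, R`, and the lines `A'P, B'Q, C'R` exchange roles with `D, E, F`.
Since duality turns collinear points into concurrent lines and back, the hypothesis and the
conclusion of the Bricard implication are swapped, which is the converse implication. The
only geometric input is that the sides of a triangle are not concurrent.
-/

namespace ProjectivePlane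

variable {Pt Ln : Type*}

def IsDual (PP : ProjectivePlane Pt Ln) (DP : ProjectivePlane Ln Pt) : Prop :=
  ∀ (m : Ln) (A : Pt), DP.incid m A ↔ PP.incid A m

variable {PP : ProjectivePlane Pt Ln} {DP : ProjectivePlane Ln Pt}

theorem IsDual.symm (hd : IsDual PP DP) : IsDual DP PP :=
  fun A m => (hd m A).symm

theorem IsDual.concur_iff_collin (hd : IsDual PP DP) {X Y Z : Pt} :
    DP.Concur X Y Z ↔ PP.Collin X Y Z := by
  simp only [Concur, Collin, hd _ _]

theorem IsDual.triangle_sides (hd : IsDual PP DP) {A B C : Pt} {bc ca ab : Ln}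
    (hT : PP.Triangle A B C) (hAca : PP.incid A ca) (hAab : PP.incid A ab)
    (hBab : PP.incid B ab) (hBbc : PP.incid B bc) (hCbc : PP.incid C bc)
    (hCca : PP.incid C ca) :
    DP.Triangle bc ca ab := by
  rintro X ⟨hXbc, hXca, hXab⟩
  rw [hd] at hXbc hXca hXab
  by_cases hXA : X = A
  · subst hXA
    exact hT bc ⟨hXbc, hBbc, hCbc⟩
  · have hca_ab : ca = ab :=
      (PP.join_unique X A hXA).unique ⟨hXca, hAca⟩ ⟨hXab, hAab⟩
    exact hT ca ⟨hAca, hca_ab ▸ hBab, hCca⟩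

theorem IsDual.bricardConfig (hd : IsDual PP DP)
    {A B C A' B' C' : Pt} {bc ca ab bc' ca' ab' aa' bb' cc' : Ln}
    {P Q R D E F : Pt} {pa qb rc : Ln}
    (hC : PP.BricardConfig A B C A' B' C' bc ca ab bc' ca' ab' aa' bb' cc' P Q R D E F
      pa qb rc) :
    DP.BricardConfig bc' ca' ab' bc ca ab A' B' C' A B C P Q R aa' bb' cc'
      pa qb rc D E F := by
  obtain ⟨hT, hT', hBbc, hCbc, hCca, hAca, hAab, hBab,
    hB'bc', hC'bc', hC'ca', hA'ca', hA'ab', hB'ab',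
    hAaa', hA'aa', hBbb', hB'bb', hCcc', hC'cc',
    hPbc, hPbc', hQca, hQca', hRab, hRab',
    hDbc, hDaa', hEca, hEbb', hFab, hFcc',
    hA'pa, hPpa, hB'qb, hQqb, hC'rc, hRrc⟩ := hC
  simp only [BricardConfig, hd _ _]
  exact ⟨hd.triangle_sides hT' hA'ca' hA'ab' hB'ab' hB'bc' hC'bc' hC'ca',
    hd.triangle_sides hT hAca hAab hBab hBbc hCbc hCca,
    hA'ca', hA'ab', hB'ab', hB'bc', hC'bc', hC'ca',
    hAca, hAab, hBab, hBbc, hCbc, hCca,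
    hPbc', hPbc, hQca', hQca, hRab', hRab,
    hA'aa', hAaa', hB'bb', hBbb', hC'cc', hCcc',
    hA'pa, hPpa, hB'qb, hQqb, hC'rc, hRrc,
    hDbc, hDaa', hEca, hEbb', hFab, hFcc'⟩

end ProjectivePlane

/-- In any projective plane, the converse Bricard property holds iff the Bricard property
holds in the dual plane (the plane whose points are the lines of the original plane, whose
lines are its points, and whose incidence is the reversed one); i.e. the dual statement of
the Bricard property is the converse Bricard property. -/
theorem stmt13 :
    ∀ (Pt Ln : Type) (PP : ProjectivePlane Pt Ln) (DP : ProjectivePlane Ln Pt),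
      (∀ (m : Ln) (A : Pt), DP.incid m A ↔ PP.incid A m) →
      (DP.Bricard ↔ PP.ConverseBricard) := by
  intro Pt Ln PP DP (hd : PP.IsDual DP)
  constructor
  · intro hB A B C A' B' C' bc ca ab bc' ca' ab' aa' bb' cc' P Q R D E F pa qb rc hC hDEF
    exact hd.symm.concur_iff_collin.2 <|
      hB _ _ _ _ _ _ _ _ _ _ _ _ _ _ _ _ _ _ _ _ _ _ _ _ (hd.bricardConfig hC)
        (hd.concur_iff_collin.2 hDEF)
  · intro hCB A B C A' B' C' bc ca ab bc' ca' ab' aa' bb' cc' P Q R D E F pa qb rc hC hcon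
    exact hd.symm.concur_iff_collin.1 <|
      hCB _ _ _ _ _ _ _ _ _ _ _ _ _ _ _ _ _ _ _ _ _ _ _ _ (hd.symm.bricardConfig hC)
        (hd.concur_iff_collin.1 hcon)
end
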